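/- Let (x,y,z) ∈ 𝓗 with x > 0, z ≥ 0, 0 ≤ y ≤ x, x ≥ √z, and xy ≤ z. Then ℓ_X(x,y,z) = 2⌈z/x⌉ + x − y. -/

import Mathlib

open scoped commutatorElement

/-- The two generators `a, b` of the discrete Heisenberg group. -/
inductive HGen : Type
  | a | b
deriving DecidableEq

/-- Relators of the discrete Heisenberg group `⟨a,b ∣ [a,[a,b]] = [b,[a,b]] = 1⟩`. -/
def Hrels : Set (FreeGroup HGen) :=
  { ⁅FreeGroup.of HGen.a, ⁅FreeGroup.of HGen.a, FreeGroup.of HGen.b⁆⁆,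
    ⁅FreeGroup.of HGen.b, ⁅FreeGroup.of HGen.a, FreeGroup.of HGen.b⁆⁆ }

/-- The discrete Heisenberg group `𝓗`. -/
abbrev Heis : Type := PresentedGroup Hrels

/-- The generator `a` of `𝓗`. -/
def Ha : Heis := PresentedGroup.of HGen.a

/-- The generator `b` of `𝓗`. -/
def Hb : Heis := PresentedGroup.of HGen.b

/-- The four letters of the alphabet `X = {a, a⁻¹, b, b⁻¹}`. -/
inductive XLetter : Type
  | a | A | b | B
deriving DecidableEq

/-- The element of `𝓗` represented by a letter of `X`. -/
def XLetter.toH : XLetter → Heis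
  | .a => Ha
  | .A => Ha⁻¹
  | .b => Hb
  | .B => Hb⁻¹

/-- The element of `𝓗` represented by a word over `X`. -/
def evalX (w : List XLetter) : Heis := (w.map XLetter.toH).prod

/-- The word `a^k` over `X`, for `k ∈ ℤ`. -/
def apow (k : ℤ) : List XLetter :=
  if 0 ≤ k then List.replicate k.toNat XLetter.a else List.replicate (-k).toNat XLetter.A

/-- The word `b^k` over `X`, for `k ∈ ℤ`. -/
def bpow (k : ℤ) : List XLetter :=
  if 0 ≤ k then List.replicate k.toNat XLetter.b else List.replicate (-k).toNat XLetter.B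

/-- The element `(x,y,z)` of `𝓗`, i.e. the element with normal form `[a,b]^z b^y a^x`. -/
def hElt (x y z : ℤ) : Heis := ⁅Ha, Hb⁆ ^ z * Hb ^ y * Ha ^ x

/-- The word length `ℓ_X(g)` of `g ∈ 𝓗` with respect to `X`. -/
noncomputable def lenX (g : Heis) : ℕ :=
  sInf { n | ∃ w : List XLetter, evalX w = g ∧ w.length = n }

/-- A word over `X` is geodesic if its length equals the word length of the
element it represents. -/
def IsGeodesicX (w : List XLetter) : Prop := w.length = lenX (evalX w)

/-! The upper bound is the word `b^(y-q) a^(x-r) b a^r b^(q-1)`, where `q = ⌈z/x⌉` and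
`r = qx - z ∈ [0, x)`, of length `2q + x - y`.

For the lower bound read a word as a walk in the `(x, y)`-plane: a letter `b` adds the current
`x`-coordinate to `z`, a letter `B` subtracts it. If all visited `x`-coordinates lie in
`[-μ, M]`, then `z ≤ M·#b + μ·#B`, and the letters `A` pay for the excursions:
`M + μ ≤ #A + x`. Since `#B ≤ #b` and `#b ≤ x` (otherwise there is nothing to show, as
`⌈z/x⌉ ≤ x`), this gives `z ≤ (#A + #b)·x`, i.e. `⌈z/x⌉ ≤ #A + #b`, while the length of the word
is `x - y + 2(#A + #b)`. -/

section Commutator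

variable {G : Type*} [Group G]

theorem semiconjBy_zpow_of_semiconjBy_mul {a b c : G}
    (h : SemiconjBy a b (c * b)) (hac : Commute a c) (m : ℤ) :
    SemiconjBy (a ^ m) b (c ^ m * b) := by
  induction m using Int.induction_on with
  | zero => simp
  | succ k ih =>
    rw [zpow_add_one, zpow_add_one, ← (Commute.self_zpow c _).eq, mul_assoc]
    exact (SemiconjBy.mul_right (hac.zpow_left _) ih).mul_left h
  | pred k ih =>
    have h' : SemiconjBy a⁻¹ b (c⁻¹ * b) := by
      simpa using (SemiconjBy.mul_right hac.inv_right h).inv_symm_left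
    rw [zpow_sub_one, zpow_sub_one, ← (Commute.self_zpow c _).inv_left.eq, mul_assoc]
    exact (SemiconjBy.mul_right (hac.zpow_left _).inv_right ih).mul_left h'

theorem zpow_mul_zpow_eq_commutatorElement_zpow {a b : G}
    (ha : Commute ⁅a, b⁆ a) (hb : Commute ⁅a, b⁆ b) (m n : ℤ) :
    a ^ m * b ^ n = ⁅a, b⁆ ^ (m * n) * b ^ n * a ^ m := by
  have h : SemiconjBy a b (⁅a, b⁆ * b) := by
    rw [SemiconjBy, commutatorElement_def]; group
  rw [((semiconjBy_zpow_of_semiconjBy_mul h ha.symm m).zpow_right n).eq,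
    (hb.zpow_left m).mul_zpow, zpow_mul]

end Commutator

theorem commute_commutatorElement_Ha : Commute ⁅Ha, Hb⁆ Ha := by
  have h : ⁅Ha, ⁅Ha, Hb⁆⁆ = 1 := by
    simpa [Ha, Hb, PresentedGroup.of, map_commutatorElement] using
      PresentedGroup.one_of_mem (rels := Hrels) (Set.mem_insert _ _)
  exact (commutatorElement_eq_one_iff_commute.mp h).symm

theorem commute_commutatorElement_Hb : Commute ⁅Ha, Hb⁆ Hb := by
  have h : ⁅Hb, ⁅Ha, Hb⁆⁆ = 1 := by
    simpa [Ha, Hb, PresentedGroup.of, map_commutatorElement] using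
      PresentedGroup.one_of_mem (rels := Hrels) (Set.mem_insert_of_mem _ rfl)
  exact (commutatorElement_eq_one_iff_commute.mp h).symm

theorem hElt_mul (x₁ y₁ z₁ x₂ y₂ z₂ : ℤ) :
    hElt x₁ y₁ z₁ * hElt x₂ y₂ z₂ = hElt (x₁ + x₂) (y₁ + y₂) (z₁ + z₂ + x₁ * y₂) := by
  have ha := commute_commutatorElement_Ha
  have hb := commute_commutatorElement_Hb
  have hca (x z : ℤ) (t : Heis) : Ha ^ x * (⁅Ha, Hb⁆ ^ z * t) = ⁅Ha, Hb⁆ ^ z * (Ha ^ x * t) :=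
    (ha.zpow_zpow z x).symm.left_comm t
  have hcb (y z : ℤ) (t : Heis) : Hb ^ y * (⁅Ha, Hb⁆ ^ z * t) = ⁅Ha, Hb⁆ ^ z * (Hb ^ y * t) :=
    (hb.zpow_zpow z y).symm.left_comm t
  have hab (x y : ℤ) (t : Heis) :
      Ha ^ x * (Hb ^ y * t) = ⁅Ha, Hb⁆ ^ (x * y) * (Hb ^ y * (Ha ^ x * t)) := by
    rw [← mul_assoc, zpow_mul_zpow_eq_commutatorElement_zpow ha hb]; group
  simp only [hElt, mul_assoc, hca, hcb, hab, zpow_add]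

theorem Ha_zpow_eq_hElt (k : ℤ) : Ha ^ k = hElt k 0 0 := by simp [hElt]

theorem Hb_zpow_eq_hElt (k : ℤ) : Hb ^ k = hElt 0 k 0 := by simp [hElt]

/-- Coordinates `(x, y, z)` of the normal form `hElt x y z`, multiplied by the rule of
`hElt_mul`. -/
@[ext]
structure HeisCoord where
  x : ℤ
  y : ℤ
  z : ℤ

namespace HeisCoord

instance : Mul HeisCoord := ⟨fun g h => ⟨g.x + h.x, g.y + h.y, g.z + h.z + g.x * h.y⟩⟩
instance : One HeisCoord := ⟨⟨0, 0, 0⟩⟩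
instance : Inv HeisCoord := ⟨fun g => ⟨-g.x, -g.y, -g.z + g.x * g.y⟩⟩

@[simp] theorem mul_x (g h : HeisCoord) : (g * h).x = g.x + h.x := rfl
@[simp] theorem mul_y (g h : HeisCoord) : (g * h).y = g.y + h.y := rfl
@[simp] theorem mul_z (g h : HeisCoord) : (g * h).z = g.z + h.z + g.x * h.y := rfl
@[simp] theorem one_x : (1 : HeisCoord).x = 0 := rfl
@[simp] theorem one_y : (1 : HeisCoord).y = 0 := rfl
@[simp] theorem one_z : (1 : HeisCoord).z = 0 := rfl
@[simp] theorem inv_x (g : HeisCoord) : g⁻¹.x = -g.x := rfl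
@[simp] theorem inv_y (g : HeisCoord) : g⁻¹.y = -g.y := rfl
@[simp] theorem inv_z (g : HeisCoord) : g⁻¹.z = -g.z + g.x * g.y := rfl

instance : Group HeisCoord where
  mul_assoc _ _ _ := by ext <;> simp <;> ring
  one_mul _ := by ext <;> simp
  mul_one _ := by ext <;> simp
  inv_mul_cancel _ := by ext <;> simp

theorem mk_zpow {x y : ℤ} (z : ℤ) (hxy : x * y = 0) (n : ℤ) :
    (⟨x, y, z⟩ : HeisCoord) ^ n = ⟨n * x, n * y, n * z⟩ := by
  induction n using Int.induction_on with
  | zero => ext <;> simp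
  | succ k ih => rw [zpow_add_one, ih]; ext <;> simp [add_mul, mul_assoc, hxy]
  | pred k ih => rw [zpow_sub_one, ih]; ext <;> simp [sub_eq_add_neg, add_mul, mul_assoc, hxy]

end HeisCoord

def HGen.coord : HGen → HeisCoord
  | .a => ⟨1, 0, 0⟩
  | .b => ⟨0, 1, 0⟩

theorem lift_coord_Hrels : ∀ r ∈ Hrels, FreeGroup.lift HGen.coord r = 1 := by
  rintro r (rfl | rfl) <;> ext <;> simp [commutatorElement_def, HGen.coord]

def toCoord : Heis →* HeisCoord := PresentedGroup.toGroup lift_coord_Hrels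

@[simp] theorem toCoord_Ha : toCoord Ha = ⟨1, 0, 0⟩ := PresentedGroup.toGroup.of _
@[simp] theorem toCoord_Hb : toCoord Hb = ⟨0, 1, 0⟩ := PresentedGroup.toGroup.of _

theorem toCoord_hElt (x y z : ℤ) : toCoord (hElt x y z) = ⟨x, y, z⟩ := by
  have hc : toCoord ⁅Ha, Hb⁆ = ⟨0, 0, 1⟩ := by
    rw [map_commutatorElement, toCoord_Ha, toCoord_Hb]; ext <;> simp [commutatorElement_def]
  simp only [hElt, map_mul, map_zpow, hc, toCoord_Ha, toCoord_Hb]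
  rw [HeisCoord.mk_zpow _ (by ring), HeisCoord.mk_zpow _ (by ring), HeisCoord.mk_zpow _ (by ring)]
  ext <;> simp

theorem evalX_nil : evalX [] = 1 := rfl

theorem evalX_cons (l : XLetter) (w : List XLetter) : evalX (l :: w) = l.toH * evalX w := by
  simp [evalX]

theorem evalX_append (u v : List XLetter) : evalX (u ++ v) = evalX u * evalX v := by
  simp [evalX]

theorem evalX_apow (k : ℤ) : evalX (apow k) = Ha ^ k := by
  unfold apow
  split_ifs with h
  · simp [evalX, XLetter.toH, ← zpow_natCast, Int.toNat_of_nonneg h]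
  · simp [evalX, XLetter.toH, ← zpow_natCast, Int.toNat_of_nonneg (by omega : 0 ≤ -k)]

theorem evalX_bpow (k : ℤ) : evalX (bpow k) = Hb ^ k := by
  unfold bpow
  split_ifs with h
  · simp [evalX, XLetter.toH, ← zpow_natCast, Int.toNat_of_nonneg h]
  · simp [evalX, XLetter.toH, ← zpow_natCast, Int.toNat_of_nonneg (by omega : 0 ≤ -k)]

theorem length_apow (k : ℤ) : (apow k).length = k.natAbs := by
  unfold apow; split_ifs <;> simp <;> omega

theorem length_bpow (k : ℤ) : (bpow k).length = k.natAbs := by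
  unfold bpow; split_ifs <;> simp <;> omega

theorem toCoord_evalX_x (w : List XLetter) :
    (toCoord (evalX w)).x = w.count .a - w.count .A := by
  induction w with
  | nil => rfl
  | cons l w ih => cases l <;> simp [evalX_cons, XLetter.toH, ih] <;> ring

theorem toCoord_evalX_y (w : List XLetter) :
    (toCoord (evalX w)).y = w.count .b - w.count .B := by
  induction w with
  | nil => rfl
  | cons l w ih => cases l <;> simp [evalX_cons, XLetter.toH, ih] <;> ring

theorem length_eq_count_add (w : List XLetter) :
    w.length = w.count .a + w.count .A + w.count .b + w.count .B := by
  induction w with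
  | nil => rfl
  | cons l w ih => cases l <;> simp [ih] <;> omega

-- `[-μ, M]` can be taken to be the range of the `x`-coordinates visited by the walk of `w`.
theorem exists_excursion_bounds (w : List XLetter) :
    ∃ M μ : ℤ, 0 ≤ M ∧ 0 ≤ μ ∧ -μ ≤ (toCoord (evalX w)).x ∧ (toCoord (evalX w)).x ≤ M ∧
      (toCoord (evalX w)).z ≤ M * w.count .b + μ * w.count .B ∧
      M + μ ≤ w.count .A + max (toCoord (evalX w)).x 0 := by
  induction w using List.reverseRecOn with
  | nil => exact ⟨0, 0, by simp [evalX_nil]⟩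
  | append_singleton w l ih =>
    obtain ⟨M, μ, hM, hμ, hlo, hhi, hz, hA⟩ := ih
    rw [evalX_append, map_mul]
    generalize toCoord (evalX w) = g at *
    have hs : (0 : ℤ) ≤ w.count .b := by positivity
    have ht : (0 : ℤ) ≤ w.count .B := by positivity
    cases l
    · refine ⟨max M (g.x + 1), μ, ?_⟩
      simp [evalX_cons, evalX_nil, XLetter.toH]
      exact ⟨by omega, hμ, by omega, hz.trans (by gcongr; exact le_max_left _ _), by omega⟩
    · refine ⟨M, max μ (1 - g.x), ?_⟩
      simp [evalX_cons, evalX_nil, XLetter.toH]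
      exact ⟨hM, by omega, by omega, by omega,
        hz.trans (by gcongr; exact le_max_left _ _), by omega⟩
    · refine ⟨M, μ, ?_⟩
      simp [evalX_cons, evalX_nil, XLetter.toH]
      exact ⟨hM, hμ, hlo, hhi, by linarith, hA⟩
    · refine ⟨M, μ, ?_⟩
      simp [evalX_cons, evalX_nil, XLetter.toH]
      exact ⟨hM, hμ, hlo, hhi, by linarith, hA⟩

theorem lenX_eq_of_forall_length_le {g : Heis} {w : List XLetter} (hw : evalX w = g)
    (hmin : ∀ w' : List XLetter, evalX w' = g → w.length ≤ w'.length) : lenX g = w.length :=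
  le_antisymm (Nat.sInf_le ⟨w, hw, rfl⟩)
    (le_csInf ⟨_, w, hw, rfl⟩ fun _ ⟨w', hw', hlen⟩ => hlen ▸ hmin w' hw')

theorem ceil_intCast_div_le_iff {x : ℤ} (hx : 0 < x) (z n : ℤ) :
    ⌈(z : ℚ) / x⌉ ≤ n ↔ z ≤ n * x := by
  rw [Int.ceil_le, div_le_iff₀ (by exact_mod_cast hx)]
  norm_cast

theorem two_mul_ceil_div_add_sub_le_length {w : List XLetter} {x y z : ℤ}
    (hw : evalX w = hElt x y z) (hx : 0 < x) (hy : 0 ≤ y) (hzx : z ≤ x * x) :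
    2 * ⌈(z : ℚ) / x⌉ + x - y ≤ w.length := by
  have hc : toCoord (evalX w) = ⟨x, y, z⟩ := hw ▸ toCoord_hElt x y z
  have hX := toCoord_evalX_x w
  have hY := toCoord_evalX_y w
  obtain ⟨M, μ, -, hμ, -, -, hzb, hA⟩ := exists_excursion_bounds w
  simp only [hc, max_eq_left hx.le] at hX hY hzb hA
  have hL := length_eq_count_add w
  set m : ℤ := ↑(w.count .A)
  set s : ℤ := ↑(w.count .b)
  set t : ℤ := ↑(w.count .B)
  have hm : 0 ≤ m := by positivity
  have hs : 0 ≤ s := by positivity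
  have hq : ⌈(z : ℚ) / x⌉ ≤ m + s := by
    rcases le_or_gt s x with hsx | hxs
    · rw [ceil_intCast_div_le_iff hx]
      calc z ≤ M * s + μ * t := hzb
        _ ≤ M * s + μ * s := by gcongr; omega
        _ = (M + μ) * s := by ring
        _ ≤ (m + x) * s := by gcongr
        _ ≤ (m + s) * x := by nlinarith
    · have := (ceil_intCast_div_le_iff hx z x).2 hzx
      omega
  omega

theorem exists_evalX_eq_hElt_length_eq {x y z : ℤ} (hx : 0 < x) (hz : 0 ≤ z) (hxy : x * y ≤ z) :
    ∃ w, evalX w = hElt x y z ∧ (w.length : ℤ) = 2 * ⌈(z : ℚ) / x⌉ + x - y := by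
  have hq := ceil_intCast_div_le_iff hx z
  generalize ⌈(z : ℚ) / x⌉ = q at hq ⊢
  have hzq : z ≤ q * x := (hq q).1 le_rfl
  have hqz : (q - 1) * x < z := lt_of_not_ge fun h => by have := (hq _).2 h; omega
  have hyq : y ≤ q := by nlinarith
  rcases hz.eq_or_lt with rfl | hz
  · have hq0 : q = 0 := by nlinarith
    refine ⟨bpow y ++ apow x, ?_, ?_⟩
    · rw [evalX_append, evalX_apow, evalX_bpow, Ha_zpow_eq_hElt, Hb_zpow_eq_hElt, hElt_mul]
      simp
    · simp only [List.length_append, length_apow, length_bpow]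
      omega
  · have hq1 : 1 ≤ q := by nlinarith
    have hrx : q * x - z < x := by linarith
    refine ⟨bpow (y - q) ++ apow (x - (q * x - z)) ++ bpow 1 ++ apow (q * x - z) ++ bpow (q - 1),
      ?_, ?_⟩
    · simp only [evalX_append, evalX_apow, evalX_bpow, Ha_zpow_eq_hElt, Hb_zpow_eq_hElt, hElt_mul]
      congr 1 <;> ring
    · simp only [List.length_append, length_apow, length_bpow]
      omega

theorem lenX_case_I22_general (x y z : ℤ) (hx : 0 < x) (hz : 0 ≤ z) (hy0 : 0 ≤ y)
    (hsqrt : Real.sqrt z ≤ (x : ℝ)) (hxy : x * y ≤ z) :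
    (lenX (hElt x y z) : ℤ) = 2 * ⌈(z : ℚ) / (x : ℚ)⌉ + x - y := by
  have hzx : z ≤ x * x := by
    have := (Real.sqrt_le_left (by positivity)).1 hsqrt
    exact_mod_cast (sq (x : ℝ)) ▸ this
  obtain ⟨w, hw, hlen⟩ := exists_evalX_eq_hElt_length_eq hx hz hxy
  have hmin (w' : List XLetter) (hw' : evalX w' = hElt x y z) : w.length ≤ w'.length := by
    have := two_mul_ceil_div_add_sub_le_length hw' hx hy0 hzx
    omega
  rw [lenX_eq_of_forall_length_le hw hmin, hlen]

/-- If `x > 0`, `z ≥ 0`, `0 ≤ y ≤ x`, `x ≥ √z` and `xy ≤ z`, then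
`ℓ_X(x,y,z) = 2⌈z/x⌉ + x − y`. -/
theorem lenX_case_I22 (x y z : ℤ) (hx : 0 < x) (hz : 0 ≤ z) (hy0 : 0 ≤ y) (hyx : y ≤ x)
    (hsqrt : Real.sqrt z ≤ (x : ℝ)) (hxy : x * y ≤ z) :
    (lenX (hElt x y z) : ℤ) = 2 * ⌈(z : ℚ) / (x : ℚ)⌉ + x - y :=
  lenX_case_I22_general x y z hx hz hy0 hsqrt hxy
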